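/- Let Φ be a crystallographic root system with Hessenberg set 𝔥 ⊆ Φ⁺. Suppose v = s_α w covers w in Bruhat order and β ∈ N_w ∩ s_α Φ⁻. Then v⁻¹β ≺ w⁻¹β in the root order; consequently, if β ∈ N_v^𝔥, then β ∈ N_w^𝔥. -/

import Mathlib

open scoped RealInnerProductSpace Pointwise

noncomputable section

/-- Euclidean `n`-space, the ambient space of the root system. -/
abbrev EV (n : ℕ) := EuclideanSpace ℝ (Fin n)

/-- The (orthogonal) reflection in the hyperplane orthogonal to `α`. -/
def sRefl {n : ℕ} (α : EV n) : EV n ≃ₗᵢ[ℝ] EV n :=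
  Submodule.reflection ((ℝ ∙ α)ᗮ)

/-- A finite crystallographic root system in `ℝⁿ`, together with a choice of
positive roots and a base of simple roots. -/
structure BasedRootSystem (n : ℕ) where
  /-- the set of roots -/
  Φ : Set (EV n)
  /-- the positive roots -/
  pos : Set (EV n)
  /-- the base of simple roots -/
  Δ : Set (EV n)
  finite : Φ.Finite
  nonzero : ∀ α ∈ Φ, α ≠ 0
  reduced : ∀ α ∈ Φ, ∀ c : ℝ, c • α ∈ Φ → c = 1 ∨ c = -1
  reflect_mem : ∀ α ∈ Φ, ∀ β ∈ Φ, sRefl α β ∈ Φ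
  cartan_int : ∀ α ∈ Φ, ∀ β ∈ Φ, ∃ m : ℤ, (m : ℝ) = 2 * ⟪α, β⟫ / ⟪α, α⟫
  pos_sub : pos ⊆ Φ
  pos_union : Φ = pos ∪ (-pos)
  pos_disj : pos ∩ (-pos) = ∅
  Δ_sub : Δ ⊆ pos
  Δ_indep : LinearIndependent ℝ ((↑) : Δ → EV n)
  Δ_span : Submodule.span ℝ Δ = ⊤
  pos_combo : ∀ α ∈ pos, α ∈ AddSubmonoid.closure Δ

namespace BasedRootSystem

variable {n : ℕ} (R : BasedRootSystem n)

/-- The root order: `α ≺ β` iff `β - α` is a nonempty sum of positive roots. -/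
def prec (a b : EV n) : Prop :=
  a ≠ b ∧ b - a ∈ AddSubmonoid.closure R.pos

/-- An ideal of the positive roots: upward closed for the root order. -/
def IsIdeal (I : Set (EV n)) : Prop :=
  I ⊆ R.pos ∧ ∀ β ∈ I, ∀ α ∈ R.pos, R.prec β α → α ∈ I

/-- A Hessenberg set: the complement in `Φ⁺` of an ideal. -/
def IsHess (h : Set (EV n)) : Prop :=
  h ⊆ R.pos ∧ R.IsIdeal (R.pos \ h)

/-- The Weyl group, generated by the reflections in the roots. -/
def Weyl : Subgroup (EV n ≃ₗᵢ[ℝ] EV n) :=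
  Subgroup.closure {g | ∃ α ∈ R.Φ, g = sRefl α}

/-- Application of a Weyl group element to a vector. -/
def ap (w : R.Weyl) (x : EV n) : EV n := (w : EV n ≃ₗᵢ[ℝ] EV n) x

/-- The inversion set `N_w = {α ∈ Φ⁺ : w⁻¹ α ∈ Φ⁻}`. -/
def N (w : R.Weyl) : Set (EV n) := {α | α ∈ R.pos ∧ R.ap w⁻¹ α ∈ -R.pos}

/-- The length of a Weyl group element, `ℓ(w) = |N_w|`. -/
def len (w : R.Weyl) : ℕ := (R.N w).ncard

/-- The `𝔥`-inversion set `N_w^𝔥 = {α ∈ Φ⁺ : w⁻¹ α ∈ -𝔥}`. -/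
def Nh (h : Set (EV n)) (w : R.Weyl) : Set (EV n) :=
  {α | α ∈ R.pos ∧ R.ap w⁻¹ α ∈ -h}

/-- `ℓ_𝔥(w) = |N_w^𝔥|`, the number of Hessenberg edges ending at `w`. -/
def lenh (h : Set (EV n)) (w : R.Weyl) : ℕ := (R.Nh h w).ncard

/-- `v` covers `w` in Bruhat order: `v = s_α w` with `ℓ(v) = ℓ(w) + 1`. -/
def Covers (v w : R.Weyl) : Prop :=
  ∃ α ∈ R.pos, (v : EV n ≃ₗᵢ[ℝ] EV n) = sRefl α * (w : EV n ≃ₗᵢ[ℝ] EV n) ∧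
    R.len v = R.len w + 1

/-- Bruhat order: the transitive closure of the relations `w < s_α w`
whenever the length increases. -/
def bruhatLt (w v : R.Weyl) : Prop :=
  Relation.TransGen (fun u u' : R.Weyl =>
    ∃ α ∈ R.pos, (u' : EV n ≃ₗᵢ[ℝ] EV n) = sRefl α * (u : EV n ≃ₗᵢ[ℝ] EV n) ∧
      R.len u < R.len u') w v

/-- The edge relation of the Hessenberg graph `Γ_𝔥`: `u → w` when `w = s_α u`
with `α ∈ Φ⁺` and `w⁻¹ α ∈ -𝔥`. -/
def Edge (h : Set (EV n)) (u w : R.Weyl) : Prop :=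
  ∃ α ∈ R.pos, (w : EV n ≃ₗᵢ[ℝ] EV n) = sRefl α * (u : EV n ≃ₗᵢ[ℝ] EV n) ∧
    R.ap w⁻¹ α ∈ -h

/-- The flow-up (reachability) order of the Hessenberg graph. -/
def flowLe (h : Set (EV n)) (x y : R.Weyl) : Prop :=
  Relation.ReflTransGen (R.Edge h) x y

/-- The strict flow-up order. -/
def flowLt (h : Set (EV n)) (x y : R.Weyl) : Prop :=
  Relation.TransGen (R.Edge h) x y

/-- The linear polynomial in `ℝ[Δ] = ℝ[x₁,…,xₙ]` corresponding to a vector. -/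
def lin (α : EV n) : MvPolynomial (Fin n) ℝ :=
  ∑ i, MvPolynomial.C (α i) * MvPolynomial.X i

/-- The action of an isometry `w` on the polynomial ring, induced by the
linear action on the ambient space: it sends `lin α` to `lin (w α)`. -/
def polyAct (w : EV n ≃ₗᵢ[ℝ] EV n) :
    MvPolynomial (Fin n) ℝ →ₐ[ℝ] MvPolynomial (Fin n) ℝ :=
  MvPolynomial.aeval fun i => lin (w (EuclideanSpace.single i 1))

/-- The dot action of the Weyl group on `Maps(W, ℝ[Δ])`:
`(w · P)(u) = w (P (w⁻¹ u))`. -/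
def dot (w : R.Weyl) (P : R.Weyl → MvPolynomial (Fin n) ℝ) :
    R.Weyl → MvPolynomial (Fin n) ℝ :=
  fun u => polyAct (w : EV n ≃ₗᵢ[ℝ] EV n) (P (w⁻¹ * u))

/-- Membership in the GKM ring `H_T^*(𝔥)`: the GKM conditions
`P(w) - P(s_α w) ∈ ⟨α⟩` along all edges of `Γ_𝔥`. -/
def GKM (h : Set (EV n)) (P : R.Weyl → MvPolynomial (Fin n) ℝ) : Prop :=
  ∀ u w : R.Weyl, ∀ α ∈ R.pos,
    (w : EV n ≃ₗᵢ[ℝ] EV n) = sRefl α * (u : EV n ≃ₗᵢ[ℝ] EV n) →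
    R.ap w⁻¹ α ∈ -h → P w - P u ∈ Ideal.span {lin α}

/-- The product `∏_{α ∈ S} α` (over `S ∩ Φ`) as an element of `ℝ[Δ]`. -/
def prodRoots (S : Set (EV n)) : MvPolynomial (Fin n) ℝ :=
  ∏ α ∈ (R.finite.inter_of_right S).toFinset, lin α

/-- A flow-up class at `x`: homogeneous of degree `ℓ_𝔥(x)`, with
`P(x) = ∏_{α ∈ N_x^𝔥} α`, supported on the flow-up of `x`, and satisfying the
GKM conditions. -/
def IsFlowUp (h : Set (EV n)) (x : R.Weyl)
    (P : R.Weyl → MvPolynomial (Fin n) ℝ) : Prop :=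
  R.GKM h P ∧ (∀ y, (P y).IsHomogeneous (R.lenh h x)) ∧
    P x = R.prodRoots (R.Nh h x) ∧ ∀ y, P y ≠ 0 → R.flowLe h x y

/-- Irreducibility: the roots admit no splitting into two nonempty mutually
orthogonal parts. -/
def IsIrreducible : Prop :=
  ∀ Ψ Ψ' : Set (EV n), Ψ ∪ Ψ' = R.Φ → (∀ a ∈ Ψ, ∀ b ∈ Ψ', ⟪a, b⟫ = 0) →
    Ψ = ∅ ∨ Ψ' = ∅

/-- `γ` is the highest root: `α ⪯ γ` for every root `α`. -/
def IsHighest (γ : EV n) : Prop :=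
  γ ∈ R.pos ∧ ∀ α ∈ R.Φ, α = γ ∨ R.prec α γ

end BasedRootSystem

/-!
Since `v = s_α w`, we have `w⁻¹β - v⁻¹β = w⁻¹β - w⁻¹(s_α β) = ⟨β, α^∨⟩ • w⁻¹α`.
The Cartan integer `⟨β, α^∨⟩` is positive because `s_α` sends the positive root `β` to a
negative one, and `w⁻¹α` is positive because otherwise `μ ↦ (s_α μ if s_α μ > 0, else μ)`
would inject `N_v` into `N_w \ {α}`, contradicting `ℓ(v) = ℓ(w) + 1`. Hence `v⁻¹β ≺ w⁻¹β`;
negating, `-w⁻¹β ≺ -v⁻¹β`, and as `Φ⁺ \ 𝔥` is upward closed, `-v⁻¹β ∈ 𝔥` forces `-w⁻¹β ∈ 𝔥`.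
-/

lemma sRefl_apply {n : ℕ} (α x : EV n) : sRefl α x = x - (2 * ⟪α, x⟫ / ⟪α, α⟫) • α := by
  rw [sRefl, Submodule.reflection_apply, Submodule.starProjection_orthogonal_val,
    Submodule.starProjection_singleton, real_inner_self_eq_norm_sq]
  simp only [RCLike.ofReal_real_eq_id, id_eq]
  module

lemma sRefl_sRefl {n : ℕ} (α x : EV n) : sRefl α (sRefl α x) = x :=
  Submodule.reflection_involutive _ x

lemma sRefl_inv {n : ℕ} (α : EV n) : (sRefl α)⁻¹ = sRefl α := by
  rw [LinearIsometryEquiv.inv_def, sRefl, Submodule.reflection_symm]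

lemma sRefl_self {n : ℕ} {α : EV n} (hα : α ≠ 0) : sRefl α α = -α := by
  rw [sRefl_apply, mul_div_assoc, div_self (inner_self_ne_zero.mpr hα), mul_one]
  module

namespace BasedRootSystem

variable {n : ℕ} (R : BasedRootSystem n)

def simpleBasis : Module.Basis R.Δ ℝ (EV n) :=
  Module.Basis.mk R.Δ_indep (by rw [Subtype.range_coe, R.Δ_span])

def height : EV n →ₗ[ℝ] ℝ := R.simpleBasis.sumCoords

lemma height_simple {δ : EV n} (hδ : δ ∈ R.Δ) : R.height δ = 1 := by
  have h : δ = R.simpleBasis ⟨δ, hδ⟩ := by rw [simpleBasis, Module.Basis.mk_apply]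
  rw [height, h, Module.Basis.sumCoords_self_apply]

lemma eq_zero_or_height_pos {x : EV n} (hx : x ∈ AddSubmonoid.closure R.Δ) :
    x = 0 ∨ 0 < R.height x := by
  induction hx using AddSubmonoid.closure_induction with
  | mem y hy => exact Or.inr (by rw [R.height_simple hy]; norm_num)
  | zero => exact Or.inl rfl
  | add a b _ _ iha ihb =>
    rcases iha with ha | ha <;> rcases ihb with hb | hb
    · left; rw [ha, hb, add_zero]
    · right; rwa [ha, zero_add]
    · right; rwa [hb, add_zero]
    · right; rw [map_add]; linarith

lemma height_pos {x : EV n} (hx : x ∈ R.pos) : 0 < R.height x :=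
  (R.eq_zero_or_height_pos (R.pos_combo x hx)).resolve_left (R.nonzero x (R.pos_sub hx))

lemma height_neg {x : EV n} (hx : x ∈ -R.pos) : R.height x < 0 := by
  simpa using R.height_pos (Set.mem_neg.mp hx)

lemma notMem_pos_of_mem_neg {x : EV n} (hx : x ∈ -R.pos) : x ∉ R.pos :=
  fun hpos => (R.height_neg hx).not_gt (R.height_pos hpos)

lemma mem_neg_of_notMem_pos {x : EV n} (hx : x ∈ R.Φ) (hpos : x ∉ R.pos) : x ∈ -R.pos :=
  (R.pos_union ▸ hx).resolve_left hpos

lemma mem_neg_of_height_neg {x : EV n} (hx : x ∈ R.Φ) (hneg : R.height x < 0) :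
    x ∈ -R.pos :=
  R.mem_neg_of_notMem_pos hx fun hpos => (R.height_pos hpos).not_gt hneg

lemma cartan_pos_of_sRefl_mem_neg {α μ : EV n} (hα : α ∈ R.pos) (hμ : μ ∈ R.pos)
    (h : sRefl α μ ∈ -R.pos) : 0 < 2 * ⟪α, μ⟫ / ⟪α, α⟫ := by
  have hαh := R.height_pos hα
  have hμh := R.height_pos hμ
  have hsh := R.height_neg h
  rw [sRefl_apply, map_sub, map_smul, smul_eq_mul] at hsh
  nlinarith

lemma exists_cartan_eq_natCast {α μ : EV n} (hα : α ∈ R.Φ) (hμ : μ ∈ R.Φ)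
    (hpos : 0 < 2 * ⟪α, μ⟫ / ⟪α, α⟫) : ∃ k : ℕ, 0 < k ∧ 2 * ⟪α, μ⟫ / ⟪α, α⟫ = k := by
  obtain ⟨m, hm⟩ := R.cartan_int α hα μ hμ
  have hm0 : 0 < m := by exact_mod_cast hm ▸ hpos
  exact ⟨m.toNat, by omega, by rw [← hm]; exact_mod_cast (Int.toNat_of_nonneg hm0.le).symm⟩

lemma image_Φ_of_mem_Weyl {g : EV n ≃ₗᵢ[ℝ] EV n} (hg : g ∈ R.Weyl) : g '' R.Φ = R.Φ := by
  induction hg using Subgroup.closure_induction with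
  | mem x hx =>
    obtain ⟨α, hα, rfl⟩ := hx
    refine (Set.mapsTo_iff_image_subset.mp fun y hy => R.reflect_mem α hα y hy).antisymm ?_
    exact fun y hy => ⟨sRefl α y, R.reflect_mem α hα y hy, sRefl_sRefl α y⟩
  | one => simp
  | mul a b _ _ iha ihb => rw [LinearIsometryEquiv.coe_mul, Set.image_comp, ihb, iha]
  | inv a _ iha =>
    conv_lhs => rw [← iha]
    rw [LinearIsometryEquiv.inv_def, ← Set.image_comp]
    simp

lemma ap_mem_Φ (g : R.Weyl) {x : EV n} (hx : x ∈ R.Φ) : R.ap g x ∈ R.Φ :=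
  R.image_Φ_of_mem_Weyl g.2 ▸ Set.mem_image_of_mem _ hx

lemma ap_neg (g : R.Weyl) (x : EV n) : R.ap g (-x) = -R.ap g x :=
  map_neg _ x

lemma N_finite (w : R.Weyl) : (R.N w).Finite :=
  R.finite.subset fun _ hx => R.pos_sub hx.1

section Cover

variable {R} {v w : R.Weyl} {α : EV n}

lemma ap_inv_eq_ap_inv_sRefl
    (hv : (v : EV n ≃ₗᵢ[ℝ] EV n) = sRefl α * (w : EV n ≃ₗᵢ[ℝ] EV n)) (x : EV n) :
    R.ap v⁻¹ x = R.ap w⁻¹ (sRefl α x) := by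
  simp only [ap, InvMemClass.coe_inv, hv, mul_inv_rev, sRefl_inv,
    LinearIsometryEquiv.coe_mul, Function.comp_apply]

lemma ap_inv_sub_ap_inv
    (hv : (v : EV n ≃ₗᵢ[ℝ] EV n) = sRefl α * (w : EV n ≃ₗᵢ[ℝ] EV n)) (x : EV n) :
    R.ap w⁻¹ x - R.ap v⁻¹ x = (2 * ⟪α, x⟫ / ⟪α, α⟫) • R.ap w⁻¹ α := by
  rw [ap_inv_eq_ap_inv_sRefl hv, sRefl_apply]
  simp only [ap, map_sub, map_smul, sub_sub_cancel]

lemma sRefl_mem_N_sdiff (hα : α ∈ R.pos)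
    (hv : (v : EV n ≃ₗᵢ[ℝ] EV n) = sRefl α * (w : EV n ≃ₗᵢ[ℝ] EV n)) {μ : EV n}
    (hμ : μ ∈ R.N v) (hs : sRefl α μ ∈ R.pos) : sRefl α μ ∈ R.N w \ {α} := by
  refine ⟨⟨hs, ap_inv_eq_ap_inv_sRefl hv μ ▸ hμ.2⟩, fun hsα => ?_⟩
  have hμα : μ = -α := by
    rw [← sRefl_sRefl α μ, Set.mem_singleton_iff.mp hsα, sRefl_self (R.nonzero α (R.pos_sub hα))]
  exact R.notMem_pos_of_mem_neg (by simpa [hμα] using hα) hμ.1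

lemma mem_N_sdiff_of_sRefl_mem_neg (hα : α ∈ R.pos)
    (hv : (v : EV n ≃ₗᵢ[ℝ] EV n) = sRefl α * (w : EV n ≃ₗᵢ[ℝ] EV n))
    (hw : R.ap w⁻¹ α ∈ -R.pos) {μ : EV n} (hμ : μ ∈ R.N v) (hs : sRefl α μ ∈ -R.pos) :
    μ ∈ R.N w \ {α} := by
  have hwμ : R.ap w⁻¹ μ = R.ap v⁻¹ μ + (2 * ⟪α, μ⟫ / ⟪α, α⟫) • R.ap w⁻¹ α := by
    rw [← ap_inv_sub_ap_inv hv, add_sub_cancel]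
  have hheight : R.height (R.ap w⁻¹ μ) < 0 := by
    have hc := R.cartan_pos_of_sRefl_mem_neg hα hμ.1 hs
    have hvμ := R.height_neg hμ.2
    have hwα := R.height_neg hw
    rw [hwμ, map_add, map_smul, smul_eq_mul]
    nlinarith
  refine ⟨⟨hμ.1, R.mem_neg_of_height_neg (R.ap_mem_Φ w⁻¹ (R.pos_sub hμ.1)) hheight⟩, ?_⟩
  rintro rfl
  have hvμ : R.ap v⁻¹ μ = -R.ap w⁻¹ μ := by
    rw [ap_inv_eq_ap_inv_sRefl hv, sRefl_self (R.nonzero μ (R.pos_sub hα)), ap_neg]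
  exact R.notMem_pos_of_mem_neg hμ.2 (hvμ ▸ by simpa using hw)

lemma len_lt_of_ap_inv_mem_neg (hα : α ∈ R.pos)
    (hv : (v : EV n ≃ₗᵢ[ℝ] EV n) = sRefl α * (w : EV n ≃ₗᵢ[ℝ] EV n))
    (hw : R.ap w⁻¹ α ∈ -R.pos) : R.len v < R.len w := by
  classical
  let F : EV n → EV n := fun μ => if sRefl α μ ∈ R.pos then sRefl α μ else μ
  have hmaps : ∀ μ ∈ R.N v, F μ ∈ R.N w \ {α} := fun μ hμ => by
    by_cases hs : sRefl α μ ∈ R.pos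
    · simpa only [F, if_pos hs] using sRefl_mem_N_sdiff hα hv hμ hs
    · have hs' := R.mem_neg_of_notMem_pos
        (R.reflect_mem α (R.pos_sub hα) μ (R.pos_sub hμ.1)) hs
      simpa only [F, if_neg hs] using mem_N_sdiff_of_sRefl_mem_neg hα hv hw hμ hs'
  have hinj : Set.InjOn F (R.N v) := fun μ₁ h₁ μ₂ h₂ heq => by
    by_cases c₁ : sRefl α μ₁ ∈ R.pos <;> by_cases c₂ : sRefl α μ₂ ∈ R.pos <;>
      simp only [F, c₁, c₂, if_true, if_false] at heq
    · simpa only [sRefl_sRefl] using congrArg (sRefl α) heq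
    · exact (c₂ (by rw [← heq, sRefl_sRefl]; exact h₁.1)).elim
    · exact (c₁ (by rw [heq, sRefl_sRefl]; exact h₂.1)).elim
    · exact heq
  have hαN : α ∈ R.N w := ⟨hα, hw⟩
  have hle := Set.ncard_le_ncard_of_injOn F hmaps hinj ((R.N_finite w).sdiff)
  rw [Set.ncard_sdiff_singleton_of_mem hαN] at hle
  have hpos := (Set.ncard_pos (R.N_finite w)).mpr ⟨α, hαN⟩
  unfold len
  omega

lemma ap_inv_mem_pos_of_len_lt (hα : α ∈ R.pos)
    (hv : (v : EV n ≃ₗᵢ[ℝ] EV n) = sRefl α * (w : EV n ≃ₗᵢ[ℝ] EV n))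
    (hlen : R.len w < R.len v) : R.ap w⁻¹ α ∈ R.pos := by
  by_contra hpos
  exact (len_lt_of_ap_inv_mem_neg hα hv
    (R.mem_neg_of_notMem_pos (R.ap_mem_Φ w⁻¹ (R.pos_sub hα)) hpos)).not_gt hlen

end Cover

lemma prec_of_sub_eq_nsmul {a b γ : EV n} (hγ : γ ∈ R.pos) {k : ℕ} (hk : 0 < k)
    (h : b - a = k • γ) : R.prec a b := by
  refine ⟨fun hab => ?_, h ▸ nsmul_mem (AddSubmonoid.subset_closure hγ) k⟩
  rw [hab, sub_self, eq_comm, ← Nat.cast_smul_eq_nsmul ℝ, smul_eq_zero, Nat.cast_eq_zero] at h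
  exact h.elim hk.ne' (R.nonzero γ (R.pos_sub hγ))

lemma prec_neg {a b : EV n} (h : R.prec a b) : R.prec (-b) (-a) :=
  ⟨fun hab => h.1 (neg_injective hab).symm, by simpa [sub_eq_add_neg, add_comm] using h.2⟩

lemma IsHess.neg_mem_of_prec {R : BasedRootSystem n} {h : Set (EV n)} (hh : R.IsHess h)
    {x y : EV n} (hx : x ∈ -R.pos) (hy : y ∈ -h) (hxy : R.prec y x) : x ∈ -h := by
  by_contra hxh
  exact (hh.2.2 (-x) ⟨hx, hxh⟩ (-y) (hh.1 hy) (R.prec_neg hxy)).2 hy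

end BasedRootSystem

open BasedRootSystem in
/-- If `v = s_α w` covers `w` and `β ∈ N_w ∩ s_α Φ⁻`, then `v⁻¹β ≺ w⁻¹β` in the
root order; consequently `β ∈ N_v^𝔥` implies `β ∈ N_w^𝔥`. -/
theorem hinv_cover_case2 {n : ℕ} (R : BasedRootSystem n) (h : Set (EV n))
    (hh : R.IsHess h) (v w : R.Weyl) (α : EV n) (hα : α ∈ R.pos)
    (hv : (v : EV n ≃ₗᵢ[ℝ] EV n) = sRefl α * (w : EV n ≃ₗᵢ[ℝ] EV n))
    (hlen : R.len v = R.len w + 1) (β : EV n)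
    (hβ : β ∈ R.N w ∩ ⇑(sRefl α) '' (-R.pos)) :
    R.prec (R.ap v⁻¹ β) (R.ap w⁻¹ β) ∧ (β ∈ R.Nh h v → β ∈ R.Nh h w) := by
  obtain ⟨⟨hβpos, hwβ⟩, γ, hγ, hγβ⟩ := hβ
  have hsβ : sRefl α β ∈ -R.pos := by rwa [← hγβ, sRefl_sRefl]
  obtain ⟨k, hk, hc⟩ := R.exists_cartan_eq_natCast (R.pos_sub hα) (R.pos_sub hβpos)
    (R.cartan_pos_of_sRefl_mem_neg hα hβpos hsβ)
  have hprec : R.prec (R.ap v⁻¹ β) (R.ap w⁻¹ β) :=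
    R.prec_of_sub_eq_nsmul (ap_inv_mem_pos_of_len_lt hα hv (by omega)) hk
      (by rw [ap_inv_sub_ap_inv hv, hc, Nat.cast_smul_eq_nsmul])
  exact ⟨hprec, fun hβv => ⟨hβpos, hh.neg_mem_of_prec hwβ hβv.2 hprec⟩⟩
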